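/- Let f : Y → X be a simplicial map of simplicial sets such that f_0 : Y_0 → X_0 is injective. Then f is semi-ikeo if and only if f is inner Kan (relatively Segal). -/

import Mathlib

open CategoryTheory Opposite

namespace Crapo

/-- A commuting square of sets
`A → B`, `A → C`, `B → D`, `C → D` is a pullback (element-wise formulation). -/
def IsPullbackSq {A B C D : Type*} (f : A → B) (g : A → C) (h : B → D) (k : C → D) : Prop :=
  (∀ a, h (f a) = k (g a)) ∧ ∀ b c, h b = k c → ∃! a, f a = b ∧ g a = c

/-- `[n]` as an object of the simplex category. -/
abbrev Obj (n : ℕ) : SimplexCategory := SimplexCategory.mk n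

/-- The set of `n`-simplices of a simplicial set. -/
abbrev Smp (X : SSet) (n : ℕ) : Type _ := X.obj (op (Obj n))

/-- A morphism of the simplex category is *active* if it preserves endpoints. -/
def IsActive {x y : SimplexCategory} (φ : x ⟶ y) : Prop :=
  φ.toOrderHom 0 = 0 ∧ φ.toOrderHom (Fin.last x.len) = Fin.last y.len

/-- A morphism of the simplex category is *inert* if it is distance preserving. -/
def IsInert {x y : SimplexCategory} (φ : x ⟶ y) : Prop :=
  ∀ i : Fin x.len, (φ.toOrderHom i.succ : ℕ) = (φ.toOrderHom i.castSucc : ℕ) + 1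

/-- The inert inclusion `[m] ↣ [n]` sending `0` to `a`. -/
def iota (m : ℕ) {n : ℕ} (a : ℕ) (h : a + m ≤ n) : Obj m ⟶ Obj n :=
  SimplexCategory.mkHom
    ⟨fun j => ⟨a + j.1, by have := j.2; omega⟩,
     fun p q hpq => by
      simp only [Fin.mk_le_mk]
      have : p.1 ≤ q.1 := hpq
      omega⟩

/-- The `i`-th principal edge `ρ_i : [1] ↣ [k]` (an inert map). -/
def rho {k : ℕ} (i : Fin k) : Obj 1 ⟶ Obj k :=
  iota 1 i.1 (by have := i.2; omega)

/-- The unique active map `[1] → [n]`. -/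
def longMap (n : ℕ) : Obj 1 ⟶ Obj n :=
  SimplexCategory.mkHom
    ⟨fun j => ⟨j.1 * n, by
        have h : j.1 ≤ 1 := Nat.lt_succ_iff.mp j.2
        have : j.1 * n ≤ 1 * n := Nat.mul_le_mul_right n h
        omega⟩,
     fun p q hpq => by
      simp only [Fin.mk_le_mk]
      exact Nat.mul_le_mul_right n hpq⟩

/-- The long edge of an `n`-simplex. -/
def longEdge (X : SSet) (n : ℕ) (σ : Smp X n) : Smp X 1 := X.map (longMap n).op σ

/-- The vertex map `[0] → [n]` picking out vertex `i`. -/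
def vmap {n : ℕ} (i : Fin (n + 1)) : Obj 0 ⟶ Obj n :=
  SimplexCategory.mkHom ⟨fun _ => i, fun _ _ _ => le_refl _⟩

lemma vmap_comp {n m : ℕ} (j : Fin (n + 1)) (φ : Obj n ⟶ Obj m) :
    vmap j ≫ φ = vmap (φ.toOrderHom j) := by
  apply SimplexCategory.Hom.ext
  apply OrderHom.ext
  funext z
  rfl

/-- The source vertex of an edge. -/
def edgeSrc (X : SSet) : Smp X 1 → Smp X 0 := X.map (vmap (0 : Fin 2)).op

/-- The target vertex of an edge. -/
def edgeTgt (X : SSet) : Smp X 1 → Smp X 0 := X.map (vmap (1 : Fin 2)).op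

/-- Nondegeneracy of a simplex: it is not in the image of any degeneracy map. -/
def Nondeg (X : SSet) : ∀ n : ℕ, Smp X n → Prop
  | 0 => fun _ => True
  | m + 1 => fun σ =>
      ∀ (i : Fin (m + 1)) (τ : Smp X m), X.map (SimplexCategory.σ i).op τ ≠ σ

/-- A (set-valued) decomposition space: pushouts in `Δ` of active maps along
inert maps are sent to pullbacks of sets. -/
def DecompositionSpace (X : SSet) : Prop :=
  ∀ {a b c d : SimplexCategory} (f : a ⟶ b) (g : a ⟶ c) (h : b ⟶ d) (i : c ⟶ d),
    IsActive f → IsInert g → IsPushout f g h i →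
    IsPullbackSq (X.map h.op) (X.map i.op) (X.map f.op) (X.map g.op)

/-- A simplicial set is complete if `s₀ : X₀ → X₁` is injective. -/
def CompleteS (X : SSet) : Prop :=
  Function.Injective (X.map (SimplexCategory.σ (0 : Fin 1)).op : Smp X 0 → Smp X 1)

/-- A simplicial map is *ikeo* if for every active `α : [k] → [n]`, with
inert-active factorisations `ρ_i ≫ α = β_i ≫ γ_i`, the square with horizontal
maps `(γ_1,…,γ_k)*` and vertical maps induced by `f` is a pullback of sets. -/
def Ikeo {Y X : SSet} (f : Y ⟶ X) : Prop :=
  ∀ (k n : ℕ) (α : Obj k ⟶ Obj n), IsActive α →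
    ∀ (ns : Fin k → ℕ) (γ : ∀ i, Obj (ns i) ⟶ Obj n) (β : ∀ i, Obj 1 ⟶ Obj (ns i)),
      (∀ i, IsInert (γ i)) → (∀ i, IsActive (β i)) →
      (∀ i, rho i ≫ α = β i ≫ γ i) →
      IsPullbackSq
        (fun σ i => Y.map (γ i).op σ)
        (f.app (op (Obj n)))
        (fun v i => f.app (op (Obj (ns i))) (v i))
        (fun σ i => X.map (γ i).op σ)

/-- A simplicial map is *semi-ikeo* if the ikeo condition holds for every
*injective* active `α : [k] → [n]` with `k ≥ 1`. -/
def SemiIkeo {Y X : SSet} (f : Y ⟶ X) : Prop :=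
  ∀ (k n : ℕ), 1 ≤ k → ∀ (α : Obj k ⟶ Obj n), IsActive α →
    Function.Injective α.toOrderHom →
    ∀ (ns : Fin k → ℕ) (γ : ∀ i, Obj (ns i) ⟶ Obj n) (β : ∀ i, Obj 1 ⟶ Obj (ns i)),
      (∀ i, IsInert (γ i)) → (∀ i, IsActive (β i)) →
      (∀ i, rho i ≫ α = β i ≫ γ i) →
      IsPullbackSq
        (fun σ i => Y.map (γ i).op σ)
        (f.app (op (Obj n)))
        (fun v i => f.app (op (Obj (ns i))) (v i))
        (fun σ i => X.map (γ i).op σ)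

/-- The iterated fibre product `X₁ ×_{X₀} ⋯ ×_{X₀} X₁` (`n` factors). -/
def SegalSet (X : SSet) (n : ℕ) : Type _ :=
  { v : Fin n → Smp X 1 //
    ∀ (i : Fin n) (h : i.1 + 1 < n), edgeTgt X (v i) = edgeSrc X (v ⟨i.1 + 1, h⟩) }

/-- The Segal map `X_n → X₁ ×_{X₀} ⋯ ×_{X₀} X₁`. -/
def segalMap (X : SSet) (n : ℕ) (σ : Smp X n) : SegalSet X n :=
  ⟨fun i => X.map (rho i).op σ, by
    intro i h
    show X.map (vmap (1 : Fin 2)).op (X.map (rho i).op σ) =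
      X.map (vmap (0 : Fin 2)).op (X.map (rho ⟨i.1 + 1, h⟩).op σ)
    rw [← FunctorToTypes.map_comp_apply, ← FunctorToTypes.map_comp_apply,
      ← op_comp, ← op_comp, vmap_comp, vmap_comp]
    have e : (SimplexCategory.Hom.toOrderHom (rho i)) 1 =
        (SimplexCategory.Hom.toOrderHom (rho ⟨i.1 + 1, h⟩)) 0 := by
      apply Fin.ext
      simp [rho, iota]
      rfl
    rw [e]⟩

/-- The map on iterated fibre products induced by a simplicial map. -/
def segalInduced {Y X : SSet} (f : Y ⟶ X) (n : ℕ) : SegalSet Y n → SegalSet X n :=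
  fun v => ⟨fun i => f.app (op (Obj 1)) (v.1 i), by
    intro i h
    show X.map (vmap (1 : Fin 2)).op (f.app (op (Obj 1)) (v.1 i)) =
      X.map (vmap (0 : Fin 2)).op (f.app (op (Obj 1)) (v.1 ⟨i.1 + 1, h⟩))
    rw [← FunctorToTypes.naturality, ← FunctorToTypes.naturality]
    exact congrArg (f.app (op (Obj 0))) (v.2 i h)⟩

/-- A simplicial map is *inner Kan* (relatively Segal) if for each `n ≥ 2` the
square comparing the Segal maps is a pullback of sets. -/
def InnerKan {Y X : SSet} (f : Y ⟶ X) : Prop :=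
  ∀ n : ℕ, 2 ≤ n →
    IsPullbackSq (segalMap Y n) (f.app (op (Obj n))) (segalInduced f n) (segalMap X n)

/-- A simplicial map is *fully faithful* if for each `n` the square formed by
the vertex maps is a pullback of sets. -/
def FullyFaithfulMap {Y X : SSet} (f : Y ⟶ X) : Prop :=
  ∀ n : ℕ,
    IsPullbackSq
      (fun (σ : Smp Y n) (i : Fin (n + 1)) => Y.map (vmap i).op σ)
      (f.app (op (Obj n)))
      (fun v i => f.app (op (Obj 0)) (v i))
      (fun (σ : Smp X n) (i : Fin (n + 1)) => X.map (vmap i).op σ)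

/-- A *full inclusion*: a fully faithful simplicial map, injective on `0`-simplices. -/
def FullIncl {Y X : SSet} (f : Y ⟶ X) : Prop :=
  FullyFaithfulMap f ∧ Function.Injective (f.app (op (Obj 0)))

/-- A simplicial map is *culf* if its naturality square at every active map is
a pullback of sets. -/
def Culf {K X : SSet} (g : K ⟶ X) : Prop :=
  ∀ (m n : ℕ) (α : Obj m ⟶ Obj n), IsActive α →
    IsPullbackSq (K.map α.op) (g.app (op (Obj n))) (g.app (op (Obj m))) (X.map α.op)

/-- A simplicial map is *convex* if it is a full inclusion and culf. -/
def Convex {K X : SSet} (g : K ⟶ X) : Prop := FullIncl g ∧ Culf g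

/-- `Φ_n`: the set of nondegenerate `n`-simplices. -/
def Phi (X : SSet) (n : ℕ) : Type _ := { σ : Smp X n // Nondeg X n σ }

/-- The structure map of the functional `Φ_n`: the long edge. -/
def phiEdge (X : SSet) (n : ℕ) (a : Phi X n) : Smp X 1 := longEdge X n a.1

/-- Binary convolution of two linear functionals. -/
def Conv2 (X : SSet) {A B : Type*} (pa : A → Smp X 1) (pb : B → Smp X 1) : Type _ :=
  { t : Smp X 2 × A × B //
    pa t.2.1 = X.map (rho (0 : Fin 2)).op t.1 ∧
    pb t.2.2 = X.map (rho (1 : Fin 2)).op t.1 }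

/-- The structure map of a binary convolution. -/
def conv2Edge (X : SSet) {A B : Type*} {pa : A → Smp X 1} {pb : B → Smp X 1}
    (t : Conv2 X pa pb) : Smp X 1 := longEdge X 2 t.1.1

/-- Ternary convolution of three linear functionals. -/
def Conv3 (X : SSet) {A B C : Type*} (pa : A → Smp X 1) (pb : B → Smp X 1)
    (pc : C → Smp X 1) : Type _ :=
  { t : Smp X 3 × A × B × C //
    pa t.2.1 = X.map (rho (0 : Fin 3)).op t.1 ∧
    pb t.2.2.1 = X.map (rho (1 : Fin 3)).op t.1 ∧
    pc t.2.2.2 = X.map (rho (2 : Fin 3)).op t.1 }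

/-- The structure map of a ternary convolution. -/
def conv3Edge (X : SSet) {A B C : Type*} {pa : A → Smp X 1} {pb : B → Smp X 1}
    {pc : C → Smp X 1} (t : Conv3 X pa pb pc) : Smp X 1 := longEdge X 3 t.1.1

/-- `Φ_m^K` as a functional on `X`: nondegenerate `m`-simplices of `K` with
structure map the long edge, viewed in `X₁`. -/
def phiK {K X : SSet} (g : K ⟶ X) (m : ℕ) (a : Phi K m) : Smp X 1 :=
  g.app (op (Obj 1)) (phiEdge K m a)

/-- `Φ_p^{∉K}`: nondegenerate `p`-simplices of `X` none of whose principal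
edges lies in `K`. -/
def PhiNotK {K X : SSet} (g : K ⟶ X) (p : ℕ) : Type _ :=
  { σ : Smp X p // Nondeg X p σ ∧
      ∀ i : Fin p, X.map (rho i).op σ ∉ Set.range (g.app (op (Obj 1))) }

/-- The structure map of `Φ_p^{∉K}`. -/
def notKEdge {K X : SSet} (g : K ⟶ X) (p : ℕ) (a : PhiNotK g p) : Smp X 1 :=
  longEdge X p a.1

/-- `Φ_n^{∩K}`: nondegenerate `n`-simplices of `X` with at least one vertex in `K`. -/
def PhiCap {K X : SSet} (g : K ⟶ X) (n : ℕ) : Type _ :=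
  { σ : Smp X n // Nondeg X n σ ∧
      ∃ i : Fin (n + 1), X.map (vmap i).op σ ∈ Set.range (g.app (op (Obj 0))) }

/-- The structure map of `Φ_n^{∩K}`. -/
def capEdge {K X : SSet} (g : K ⟶ X) (n : ℕ) (a : PhiCap g n) : Smp X 1 :=
  longEdge X n a.1

/-- `Φ_n^{X∖K}`: nondegenerate `n`-simplices of `X` none of whose vertices lies
in `K` (i.e. nondegenerate simplices of the full hull of `X₀ ∖ K₀`). -/
def PhiComp {K X : SSet} (g : K ⟶ X) (n : ℕ) : Type _ :=
  { σ : Smp X n // Nondeg X n σ ∧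
      ∀ i : Fin (n + 1), X.map (vmap i).op σ ∉ Set.range (g.app (op (Obj 0))) }

/-- The structure map of `Φ_n^{X∖K}`. -/
def compEdge {K X : SSet} (g : K ⟶ X) (n : ℕ) (a : PhiComp g n) : Smp X 1 :=
  longEdge X n a.1

/-- `Φ_even`. -/
def PhiEven (X : SSet) : Type _ := Σ n : { n : ℕ // Even n }, Phi X n.1

/-- The structure map of `Φ_even`. -/
def evenEdge (X : SSet) (a : PhiEven X) : Smp X 1 := phiEdge X a.1.1 a.2

/-- `Φ_odd`. -/
def PhiOdd (X : SSet) : Type _ := Σ n : { n : ℕ // Odd n }, Phi X n.1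

/-- The structure map of `Φ_odd`. -/
def oddEdge (X : SSet) (a : PhiOdd X) : Smp X 1 := phiEdge X a.1.1 a.2

/-- `Φ_even^{X∖K}`. -/
def PhiCompEven {K X : SSet} (g : K ⟶ X) : Type _ :=
  Σ n : { n : ℕ // Even n }, PhiComp g n.1

/-- The structure map of `Φ_even^{X∖K}`. -/
def compEvenEdge {K X : SSet} (g : K ⟶ X) (a : PhiCompEven g) : Smp X 1 :=
  compEdge g a.1.1 a.2

/-- `Φ_odd^{X∖K}`. -/
def PhiCompOdd {K X : SSet} (g : K ⟶ X) : Type _ :=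
  Σ n : { n : ℕ // Odd n }, PhiComp g n.1

/-- The structure map of `Φ_odd^{X∖K}`. -/
def compOddEdge {K X : SSet} (g : K ⟶ X) (a : PhiCompOdd g) : Smp X 1 :=
  compEdge g a.1.1 a.2


lemma homExt {m n : ℕ} {φ ψ : Obj m ⟶ Obj n}
    (h : ∀ j : Fin (m + 1), ((φ.toOrderHom j : Fin (n + 1)) : ℕ) = (ψ.toOrderHom j : ℕ)) :
    φ = ψ := by
  apply SimplexCategory.Hom.ext
  apply OrderHom.ext
  funext j
  exact Fin.ext (h j)

lemma inert_val {m n : ℕ} {γ : Obj m ⟶ Obj n} (h : IsInert γ) :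
    ∀ j : Fin (m + 1), ((γ.toOrderHom j : Fin (n + 1)) : ℕ) =
      ((γ.toOrderHom 0 : Fin (n + 1)) : ℕ) + j.1 := by
  intro j
  induction j using Fin.induction with
  | zero => rfl
  | succ i ih =>
    have h1 := h i
    simp only [Fin.val_succ, Fin.coe_castSucc] at h1 ih ⊢
    omega

lemma nat_interval (A : ℕ → ℕ) (k e : ℕ) (h0 : A 0 ≤ e) (hl : e < A k) :
    ∃ i, i < k ∧ A i ≤ e ∧ e < A (i + 1) := by
  induction k with
  | zero => omega
  | succ p ih =>
    by_cases hc : e < A p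
    · obtain ⟨i, h1, h2, h3⟩ := ih hc
      exact ⟨i, by omega, h2, h3⟩
    · exact ⟨p, by omega, by omega, hl⟩

lemma rho_zero : rho (0 : Fin 1) = 𝟙 (Obj 1) := by
  apply homExt
  intro j
  show 0 + j.1 = j.1
  omega

lemma segalPB {Y X : SSet} (f : Y ⟶ X) (hik : InnerKan f) (n : ℕ) (hn : 1 ≤ n) :
    IsPullbackSq (segalMap Y n) (f.app (op (Obj n))) (segalInduced f n) (segalMap X n) := by
  rcases Nat.lt_or_ge n 2 with h2 | h2
  · have hn1 : n = 1 := by omega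
    subst hn1
    constructor
    · intro a
      apply Subtype.ext
      funext i
      exact FunctorToTypes.naturality f _ a
    · intro b c hbc
      have hb0 : f.app (op (Obj 1)) (b.1 0) = c := by
        have h := congrFun (congrArg Subtype.val hbc) 0
        rw [show (segalInduced f 1 b).1 0 = f.app (op (Obj 1)) (b.1 0) from rfl] at h
        rw [h, show (segalMap X 1 c).1 0 = X.map (rho (0 : Fin 1)).op c from rfl, rho_zero]
        simp
      refine ⟨b.1 0, ⟨?_, hb0⟩, ?_⟩
      · apply Subtype.ext
        funext i
        have hi : i = 0 := Subsingleton.elim _ _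
        subst hi
        show Y.map (rho (0 : Fin 1)).op (b.1 0) = b.1 0
        rw [rho_zero]
        simp
      · rintro a' ⟨h1, _⟩
        have h := congrFun (congrArg Subtype.val h1) 0
        rw [show (segalMap Y 1 a').1 0 = Y.map (rho (0 : Fin 1)).op a' from rfl, rho_zero] at h
        simpa using h
  · exact hik n h2

lemma eq_of_edges {Y X : SSet} (f : Y ⟶ X) (hik : InnerKan f) {m : ℕ} (hm : 1 ≤ m)
    {y y' : Smp Y m} (hfe : f.app (op (Obj m)) y = f.app (op (Obj m)) y')
    (he : ∀ j : Fin m, Y.map (rho j).op y = Y.map (rho j).op y') : y = y' := by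
  have P := segalPB f hik m hm
  obtain ⟨a, _, hu⟩ := P.2 (segalMap Y m y) (f.app (op (Obj m)) y) (P.1 y)
  have h1 : y = a := hu y ⟨rfl, rfl⟩
  have h2 : y' = a := hu y' ⟨Subtype.ext (funext fun j => (he j).symm), hfe.symm⟩
  rw [h1, h2]

set_option maxHeartbeats 1000000 in
/-- For a simplicial map injective on `0`-simplices, semi-ikeo is equivalent to
inner Kan (relatively Segal). -/
theorem semiIkeo_iff_innerKan {Y X : SSet} (f : Y ⟶ X)
    (hf0 : Function.Injective (f.app (op (Obj 0)))) :
    SemiIkeo f ↔ InnerKan f := by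
  constructor
  · intro hsi n hn
    have hact : IsActive (𝟙 (Obj n)) := ⟨rfl, rfl⟩
    have hinj : Function.Injective (SimplexCategory.Hom.toOrderHom (𝟙 (Obj n))) := fun a b h => h
    have hγ : ∀ i : Fin n, IsInert (rho i) := by
      intro i j
      simp [rho, iota, Fin.val_succ, Fin.coe_castSucc]
      rfl
    have hβ : ∀ i : Fin n, IsActive (𝟙 (Obj 1)) := fun _ => ⟨rfl, rfl⟩
    have hfac : ∀ i : Fin n, rho i ≫ 𝟙 (Obj n) = 𝟙 (Obj 1) ≫ rho i := by
      intro i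
      rw [Category.comp_id, Category.id_comp]
    have P := hsi n n (by omega) (𝟙 (Obj n)) hact hinj (fun _ => 1) (fun i => rho i)
      (fun _ => 𝟙 (Obj 1)) hγ hβ hfac
    constructor
    · intro a
      apply Subtype.ext
      funext i
      exact FunctorToTypes.naturality f _ a
    · intro b c hbc
      have h' : (fun i => f.app (op (Obj 1)) (b.1 i)) = fun i => X.map (rho i).op c :=
        congrArg Subtype.val hbc
      obtain ⟨a, ⟨ha1, ha2⟩, hau⟩ := P.2 b.1 c h'
      refine ⟨a, ⟨Subtype.ext ha1, ha2⟩, ?_⟩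
      rintro a' ⟨h1, h2⟩
      exact hau a' ⟨congrArg Subtype.val h1, h2⟩
  · intro hik k n hk α hα hαinj ns γ β hγ hβ hfac
    have hγ0 : ∀ (i : Fin k) (j : Fin (ns i + 1)),
        (((γ i).toOrderHom j : Fin (n + 1)) : ℕ) = ((((γ (i)).toOrderHom (0 : Fin (ns (i) + 1))) : Fin (n + 1)) : ℕ) + j.1 :=
      fun i j => inert_val (hγ i) j
    have hend : ∀ i : Fin k,
        ((((γ (i)).toOrderHom (0 : Fin (ns (i) + 1))) : Fin (n + 1)) : ℕ) = ((α.toOrderHom i.castSucc : Fin (n + 1)) : ℕ) ∧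
        ((((γ (i)).toOrderHom (0 : Fin (ns (i) + 1))) : Fin (n + 1)) : ℕ) + ns i = ((α.toOrderHom i.succ : Fin (n + 1)) : ℕ) := by
      intro i
      have e0 : (β i).toOrderHom (0 : Fin 2) = (0 : Fin (ns i + 1)) := (hβ i).1
      have e1 : (β i).toOrderHom (1 : Fin 2) = Fin.last (ns i) := (hβ i).2
      have h0 : ((α.toOrderHom i.castSucc : Fin (n + 1)) : ℕ) =
          (((γ i).toOrderHom ((β i).toOrderHom (0 : Fin 2)) : Fin (n + 1)) : ℕ) :=
        congrArg (fun φ : Obj 1 ⟶ Obj n =>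
          ((φ.toOrderHom (0 : Fin 2) : Fin (n + 1)) : ℕ)) (hfac i)
      have h1 : ((α.toOrderHom i.succ : Fin (n + 1)) : ℕ) =
          (((γ i).toOrderHom ((β i).toOrderHom (1 : Fin 2)) : Fin (n + 1)) : ℕ) :=
        congrArg (fun φ : Obj 1 ⟶ Obj n =>
          ((φ.toOrderHom (1 : Fin 2) : Fin (n + 1)) : ℕ)) (hfac i)
      rw [e0] at h0
      rw [e1] at h1
      have hlast := hγ0 i (Fin.last (ns i))
      have hlv : ((Fin.last (ns i)) : ℕ) = ns i := rfl
      exact ⟨h0.symm, by omega⟩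
    have hmono := α.toOrderHom.monotone
    have hns : ∀ i : Fin k, 1 ≤ ns i := by
      intro i
      have h1 := (hend i).1
      have h2 := (hend i).2
      have hle : ((α.toOrderHom i.castSucc : Fin (n + 1)) : ℕ) ≤
          ((α.toOrderHom i.succ : Fin (n + 1)) : ℕ) :=
        hmono (by rw [Fin.le_def]; simp only [Fin.val_succ, Fin.coe_castSucc]; omega)
      have hne : ((α.toOrderHom i.castSucc : Fin (n + 1)) : ℕ) ≠
          ((α.toOrderHom i.succ : Fin (n + 1)) : ℕ) := by
        intro hc
        have h3 := hαinj (Fin.ext hc)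
        have h4 := congrArg Fin.val h3
        simp only [Fin.val_succ, Fin.coe_castSucc] at h4
        omega
      omega
    have hA0 : ((α.toOrderHom (0 : Fin (k + 1)) : Fin (n + 1)) : ℕ) = 0 :=
      congrArg Fin.val hα.1
    have hAl : ((α.toOrderHom (Fin.last k) : Fin (n + 1)) : ℕ) = n :=
      congrArg Fin.val hα.2
    have hai_le : ∀ i : Fin k, ((((γ (i)).toOrderHom (0 : Fin (ns (i) + 1))) : Fin (n + 1)) : ℕ) + ns i ≤ n := by
      intro i
      have h2 := (hend i).2
      have hb : ((α.toOrderHom i.succ : Fin (n + 1)) : ℕ) ≤ n :=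
        Nat.lt_succ_iff.mp (α.toOrderHom i.succ).2
      omega
    have hn1 : 1 ≤ n := by
      have h1 := hai_le ⟨0, hk⟩
      have h2 := hns ⟨0, hk⟩
      omega
    have hcov : ∀ e : Fin n, ∃ i : Fin k, ((((γ (i)).toOrderHom (0 : Fin (ns (i) + 1))) : Fin (n + 1)) : ℕ) ≤ e.1 ∧ e.1 < ((((γ (i)).toOrderHom (0 : Fin (ns (i) + 1))) : Fin (n + 1)) : ℕ) + ns i := by
      intro e
      have hb0 : ((α.toOrderHom (⟨min 0 k, by omega⟩ : Fin (k + 1)) : Fin (n + 1)) : ℕ) ≤ e.1 := by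
        rw [show (⟨min 0 k, by omega⟩ : Fin (k + 1)) = 0 from Fin.ext (by simp), hA0]
        omega
      have hbl : e.1 < ((α.toOrderHom (⟨min k k, by omega⟩ : Fin (k + 1)) : Fin (n + 1)) : ℕ) := by
        rw [show (⟨min k k, by omega⟩ : Fin (k + 1)) = Fin.last k from Fin.ext (by simp), hAl]
        exact e.2
      obtain ⟨i, hik', h2, h3⟩ := nat_interval
        (fun m => ((α.toOrderHom (⟨min m k, by omega⟩ : Fin (k + 1)) : Fin (n + 1)) : ℕ))
        k e.1 hb0 hbl
      refine ⟨⟨i, hik'⟩, ?_, ?_⟩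
      · have hc : (⟨min i k, by omega⟩ : Fin (k + 1)) = (⟨i, hik'⟩ : Fin k).castSucc :=
          Fin.ext (by simp only [Fin.coe_castSucc, Fin.val_mk]; omega)
        rw [hc] at h2
        have := (hend ⟨i, hik'⟩).1
        omega
      · have hc : (⟨min (i + 1) k, by omega⟩ : Fin (k + 1)) = (⟨i, hik'⟩ : Fin k).succ :=
          Fin.ext (by simp only [Fin.val_succ, Fin.val_mk]; omega)
        rw [hc] at h3
        have := (hend ⟨i, hik'⟩).2
        omega
    have huniq : ∀ (e : ℕ) (i i' : Fin k), ((((γ (i)).toOrderHom (0 : Fin (ns (i) + 1))) : Fin (n + 1)) : ℕ) ≤ e → e < ((((γ (i)).toOrderHom (0 : Fin (ns (i) + 1))) : Fin (n + 1)) : ℕ) + ns i →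
        ((((γ (i')).toOrderHom (0 : Fin (ns (i') + 1))) : Fin (n + 1)) : ℕ) ≤ e → e < ((((γ (i')).toOrderHom (0 : Fin (ns (i') + 1))) : Fin (n + 1)) : ℕ) + ns i' → i = i' := by
      intro e i i' h1 h2 h3 h4
      rcases Nat.lt_trichotomy i.1 i'.1 with h | h | h
      · exfalso
        have hle : ((α.toOrderHom i.succ : Fin (n + 1)) : ℕ) ≤
            ((α.toOrderHom i'.castSucc : Fin (n + 1)) : ℕ) :=
          hmono (by rw [Fin.le_def]; simp only [Fin.val_succ, Fin.coe_castSucc]; omega)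
        have e1 := (hend i).2
        have e2 := (hend i').1
        omega
      · exact Fin.ext h
      · exfalso
        have hle : ((α.toOrderHom i'.succ : Fin (n + 1)) : ℕ) ≤
            ((α.toOrderHom i.castSucc : Fin (n + 1)) : ℕ) :=
          hmono (by rw [Fin.le_def]; simp only [Fin.val_succ, Fin.coe_castSucc]; omega)
        have e1 := (hend i').2
        have e2 := (hend i).1
        omega
    have hcomp : ∀ (i : Fin k) (j : Fin (ns i)) (h : ((((γ (i)).toOrderHom (0 : Fin (ns (i) + 1))) : Fin (n + 1)) : ℕ) + j.1 < n),
        rho j ≫ γ i = rho (⟨((((γ (i)).toOrderHom (0 : Fin (ns (i) + 1))) : Fin (n + 1)) : ℕ) + j.1, h⟩ : Fin n) := by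
      intro i j h
      apply homExt
      intro z
      have hz := hγ0 i ⟨j.1 + z.1, by have := j.2; have := z.2; omega⟩
      have lhs : (((rho j ≫ γ i).toOrderHom z : Fin (n + 1)) : ℕ) =
          (((γ i).toOrderHom (⟨j.1 + z.1, by have := j.2; have := z.2; omega⟩ :
            Fin (ns i + 1)) : Fin (n + 1)) : ℕ) := rfl
      have rhs : (((rho (⟨((((γ (i)).toOrderHom (0 : Fin (ns (i) + 1))) : Fin (n + 1)) : ℕ) + j.1, h⟩ : Fin n)).toOrderHom z : Fin (n + 1)) : ℕ) =
          (((((γ (i)).toOrderHom (0 : Fin (ns (i) + 1))) : Fin (n + 1)) : ℕ) + j.1) + z.1 := rfl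
      rw [lhs, rhs, hz]
      simp only [Fin.val_mk]
      omega
    refine ⟨?_, ?_⟩
    · intro a
      funext i
      exact FunctorToTypes.naturality f ((γ i).op) a
    · intro v σ hvσ
      have hv : ∀ i, f.app (op (Obj (ns i))) (v i) = X.map (γ i).op σ :=
        fun i => congrFun hvσ i
      have hex : ∀ e : Fin n, ∃ i : Fin k, ∃ j : Fin (ns i), ((((γ (i)).toOrderHom (0 : Fin (ns (i) + 1))) : Fin (n + 1)) : ℕ) + j.1 = e.1 := by
        intro e
        obtain ⟨i, h1, h2⟩ := hcov e
        exact ⟨i, ⟨e.1 - ((((γ (i)).toOrderHom (0 : Fin (ns (i) + 1))) : Fin (n + 1)) : ℕ), by omega⟩, by simp only [Fin.val_mk]; omega⟩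
      choose I J hIJ using hex
      have hw : ∀ (e : Fin n) (i : Fin k) (j : Fin (ns i)), ((((γ (i)).toOrderHom (0 : Fin (ns (i) + 1))) : Fin (n + 1)) : ℕ) + j.1 = e.1 →
          Y.map (rho j).op (v i) = Y.map (rho (J e)).op (v (I e)) := by
        intro e i j hij
        have hIe : I e = i := by
          have h1 := hIJ e
          have h2 := (J e).2
          have h3 := j.2
          exact huniq e.1 (I e) i (by omega) (by omega) (by omega) (by omega)
        subst hIe
        have hJe : J e = j := by
          apply Fin.ext
          have h1 := hIJ e
          omega
        rw [hJe]
      have hwf : ∀ e : Fin n, f.app (op (Obj 1)) (Y.map (rho (J e)).op (v (I e))) =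
          X.map (rho e).op σ := by
        intro e
        rw [FunctorToTypes.naturality, hv (I e), ← FunctorToTypes.map_comp_apply, ← op_comp,
          hcomp (I e) (J e) (by have := hIJ e; have := e.2; omega)]
        rw [show (⟨((((γ (I e)).toOrderHom (0 : Fin (ns (I e) + 1))) : Fin (n + 1)) : ℕ) + (J e).1, by have := hIJ e; have := e.2; omega⟩ : Fin n) = e from
          Fin.ext (hIJ e)]
      have hvert : ∀ (i : Fin k) (c : Fin (ns i + 1)),
          f.app (op (Obj 0)) (Y.map (vmap c).op (v i)) =
            X.map (vmap (⟨((((γ (i)).toOrderHom (0 : Fin (ns (i) + 1))) : Fin (n + 1)) : ℕ) + c.1, by have := hai_le i; have := c.2; omega⟩ :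
              Fin (n + 1))).op σ := by
        intro i c
        rw [FunctorToTypes.naturality, hv i, ← FunctorToTypes.map_comp_apply, ← op_comp,
          vmap_comp]
        rw [show (γ i).toOrderHom c =
          (⟨((((γ (i)).toOrderHom (0 : Fin (ns (i) + 1))) : Fin (n + 1)) : ℕ) + c.1, by have := hai_le i; have := c.2; omega⟩ : Fin (n + 1)) from
          Fin.ext (hγ0 i c)]
      have hcompat : ∀ (e : Fin n) (h : e.1 + 1 < n),
          edgeTgt Y (Y.map (rho (J e)).op (v (I e))) =
            edgeSrc Y (Y.map (rho (J ⟨e.1 + 1, h⟩)).op (v (I ⟨e.1 + 1, h⟩))) := by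
        intro e h
        apply hf0
        have t1 : edgeTgt Y (Y.map (rho (J e)).op (v (I e))) =
            Y.map (vmap (⟨(J e).1 + 1, by have := (J e).2; omega⟩ :
              Fin (ns (I e) + 1))).op (v (I e)) := by
          show Y.map (vmap (1 : Fin 2)).op (Y.map (rho (J e)).op (v (I e))) = _
          rw [← FunctorToTypes.map_comp_apply, ← op_comp, vmap_comp]
          rw [show (rho (J e)).toOrderHom (1 : Fin 2) =
            (⟨(J e).1 + 1, by have := (J e).2; omega⟩ : Fin (ns (I e) + 1)) from
            Fin.ext rfl]
        have t2 : edgeSrc Y (Y.map (rho (J ⟨e.1 + 1, h⟩)).op (v (I ⟨e.1 + 1, h⟩))) =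
            Y.map (vmap (⟨(J ⟨e.1 + 1, h⟩).1, by have := (J ⟨e.1 + 1, h⟩).2; omega⟩ :
              Fin (ns (I ⟨e.1 + 1, h⟩) + 1))).op (v (I ⟨e.1 + 1, h⟩)) := by
          show Y.map (vmap (0 : Fin 2)).op (Y.map (rho (J ⟨e.1 + 1, h⟩)).op (v (I ⟨e.1 + 1, h⟩))) = _
          rw [← FunctorToTypes.map_comp_apply, ← op_comp, vmap_comp]
          rw [show (rho (J ⟨e.1 + 1, h⟩)).toOrderHom (0 : Fin 2) =
            (⟨(J ⟨e.1 + 1, h⟩).1, by have := (J ⟨e.1 + 1, h⟩).2; omega⟩ :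
              Fin (ns (I ⟨e.1 + 1, h⟩) + 1)) from Fin.ext rfl]
        rw [t1, t2, hvert (I e), hvert (I ⟨e.1 + 1, h⟩)]
        have hfin : (⟨((((γ (I e)).toOrderHom (0 : Fin (ns (I e) + 1))) : Fin (n + 1)) : ℕ) + ((⟨(J e).1 + 1, by have := (J e).2; omega⟩ :
              Fin (ns (I e) + 1)) : Fin (ns (I e) + 1)).1,
              by have := hai_le (I e); have := (J e).2; omega⟩ : Fin (n + 1)) =
            (⟨((((γ (I ⟨e.1 + 1, h⟩)).toOrderHom (0 : Fin (ns (I ⟨e.1 + 1, h⟩) + 1))) : Fin (n + 1)) : ℕ) + ((⟨(J ⟨e.1 + 1, h⟩).1, by have := (J ⟨e.1 + 1, h⟩).2; omega⟩ :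
              Fin (ns (I ⟨e.1 + 1, h⟩) + 1)) : Fin (ns (I ⟨e.1 + 1, h⟩) + 1)).1,
              by have := hai_le (I ⟨e.1 + 1, h⟩); have := (J ⟨e.1 + 1, h⟩).2; omega⟩ :
              Fin (n + 1)) := by
          apply Fin.ext
          show ((((γ (I e)).toOrderHom (0 : Fin (ns (I e) + 1))) : Fin (n + 1)) : ℕ) + ((J e).1 + 1) = ((((γ (I ⟨e.1 + 1, h⟩)).toOrderHom (0 : Fin (ns (I ⟨e.1 + 1, h⟩) + 1))) : Fin (n + 1)) : ℕ) + (J ⟨e.1 + 1, h⟩).1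
          have h1 := hIJ e
          have h2 := hIJ ⟨e.1 + 1, h⟩
          simp only [Fin.val_mk] at h1 h2 ⊢
          omega
        rw [hfin]
      have hP := segalPB f hik n hn1
      obtain ⟨τ, ⟨hτ1, hτ2⟩, hτu⟩ := hP.2
        ⟨fun e => Y.map (rho (J e)).op (v (I e)), hcompat⟩ σ
        (Subtype.ext (funext fun e => hwf e))
      have hτedge : ∀ e : Fin n, Y.map (rho e).op τ = Y.map (rho (J e)).op (v (I e)) :=
        fun e => congrFun (congrArg Subtype.val hτ1) e
      have hres : ∀ i, Y.map (γ i).op τ = v i := by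
        intro i
        apply eq_of_edges f hik (hns i)
        · rw [FunctorToTypes.naturality, hτ2, ← hv i]
        · intro j
          have hlt : ((((γ (i)).toOrderHom (0 : Fin (ns (i) + 1))) : Fin (n + 1)) : ℕ) + j.1 < n := by have := hai_le i; have := j.2; omega
          have c1 : Y.map (rho j).op (Y.map (γ i).op τ) =
              Y.map (rho (⟨((((γ (i)).toOrderHom (0 : Fin (ns (i) + 1))) : Fin (n + 1)) : ℕ) + j.1, hlt⟩ : Fin n)).op τ := by
            rw [← FunctorToTypes.map_comp_apply, ← op_comp, hcomp i j hlt]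
          rw [c1, hτedge ⟨((((γ (i)).toOrderHom (0 : Fin (ns (i) + 1))) : Fin (n + 1)) : ℕ) + j.1, hlt⟩]
          exact (hw ⟨((((γ (i)).toOrderHom (0 : Fin (ns (i) + 1))) : Fin (n + 1)) : ℕ) + j.1, hlt⟩ i j rfl).symm
      refine ⟨τ, ⟨funext hres, hτ2⟩, ?_⟩
      rintro a' ⟨h1, h2⟩
      apply hτu
      refine ⟨Subtype.ext (funext fun e => ?_), h2⟩
      have hre : rho e = rho (J e) ≫ γ (I e) := by
        rw [hcomp (I e) (J e) (by have := hIJ e; have := e.2; omega)]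
        exact congrArg rho (Fin.ext (hIJ e)).symm
      show Y.map (rho e).op a' = Y.map (rho (J e)).op (v (I e))
      rw [hre, op_comp, FunctorToTypes.map_comp_apply]
      rw [show Y.map (γ (I e)).op a' = v (I e) from congrFun h1 (I e)]

end Crapo
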